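/- Let K be a field of characteristic 2 and let 𝔤 = K × 𝔞 × K carry the double-extension bracket ⁅(u,a,v),(u',a',v')⁆_𝔤 := (B (D a) a', ⁅a,a'⁆ + v • D a' + v' • D a, 0), where additionally B a (D a) = 0 for all a ∈ 𝔞. Assume: (a) sq : 𝔞 → 𝔞 is a 2-structure on 𝔞, i.e. ⁅sq a, b⁆ = ⁅a,⁅a,b⁆⁆, sq (λ • a) = λ² • sq a, and sq (a+b) = sq a + sq b + ⁅a,b⁆ for all a,b ∈ 𝔞, λ ∈ K; (b) D is restricted: D (sq a) = ⁅a, D a⁆ for all a; (c) D has the 2-property: D² = γ • D + ad a₀ with D a₀ = 0, for some γ ∈ K and a₀ ∈ 𝔞; (d) b₀ ∈ 𝔞 satisfies ⁅b₀, a⁆ = 0 for all a ∈ 𝔞 and D b₀ = 0; (e) 𝒫 : 𝔞 → K satisfies 𝒫 (λ • a) = λ² • 𝒫 a and 𝒫 (a+b) = 𝒫 a + 𝒫 b + B (D b) a for all a,b ∈ 𝔞, λ ∈ K. Then for all m, l ∈ K there exists a map sq_𝔤 : 𝔤 → 𝔤 which is a 2-structure on 𝔤, i.e. ⁅sq_𝔤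 f, g⁆_𝔤 = ⁅f,⁅f,g⁆_𝔤⁆_𝔤, sq_𝔤 (λ • f) = λ² • sq_𝔤 f, and sq_𝔤 (f+g) = sq_𝔤 f + sq_𝔤 g + ⁅f,g⁆_𝔤 for all f,g ∈ 𝔤, λ ∈ K, and which satisfies sq_𝔤 (0,a,0) = (𝒫 a, sq a, 0) for all a ∈ 𝔞, sq_𝔤 (0,0,1) = (l, a₀, γ), and sq_𝔤 (1,0,0) = (m, b₀, 0). -/

import Mathlib

/-!
Additivity and the prescribed values force
`sq_𝔤 (u, a, v) = (m u² + 𝒫 a + l v², u² b₀ + sq a + v² a₀ + v D a, γ v²)`,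
since `(1,0,0)` is central and `⁅(0,a,0), (0,0,v)⁆_𝔤 = (0, v D a, 0)`. This map is a 2-structure:
additivity reduces to `(x + y)² = x² + y²` and the symmetry `B (D a) b = B (D b) a`, which follows
from `B a (D a) = 0`; in `⁅sq_𝔤 f, g⁆ = ⁅f, ⁅f, g⁆⁆` the 2-property of `D` accounts for the
`v²` and `v v'` terms, invariance of `B` for the first component, and characteristic 2 kills the
cross term `2 v ⁅a, D a'⁆` coming from the derivation rule.
-/

/-- The bracket of the double extension of `(𝔞, B)` by the derivation `D`
on the space `K × 𝔞 × K`, in characteristic 2. -/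
def doubleExtBracket2 {K : Type*} [Field K] {L : Type*} [LieRing L] [LieAlgebra K L]
    (B : L →ₗ[K] L →ₗ[K] K) (D : L →ₗ[K] L) (f g : K × L × K) : K × L × K :=
  (B (D f.2.1) g.2.1, ⁅f.2.1, g.2.1⁆ + f.2.2 • D g.2.1 + g.2.2 • D f.2.1, (0 : K))

section

variable {K : Type*} [Field K] {L : Type*} [LieRing L] [LieAlgebra K L]
  {B : L →ₗ[K] L →ₗ[K] K} {D : L →ₗ[K] L} {γ : K} {a₀ : L}

theorem bilin_map_left_eq_map_right [CharP K 2]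
    (hDinv : ∀ a b : L, B (D a) b + B a (D b) = 0) (a b : L) :
    B (D a) b = B a (D b) :=
  CharTwo.add_eq_zero.mp (hDinv a b)

theorem bilin_map_left_comm [CharP K 2]
    (hDinv : ∀ a b : L, B (D a) b + B a (D b) = 0) (hDinv2 : ∀ a : L, B a (D a) = 0)
    (a b : L) : B (D a) b = B (D b) a := by
  have h := hDinv2 (a + b)
  simp only [map_add, LinearMap.add_apply, hDinv2, zero_add, add_zero] at h
  rw [bilin_map_left_eq_map_right hDinv, bilin_map_left_eq_map_right hDinv]
  exact (CharTwo.add_eq_zero.mp h).symm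

theorem bilin_map_map [CharP K 2]
    (hDinv : ∀ a b : L, B (D a) b + B a (D b) = 0)
    (hpprop : ∀ b : L, D (D b) = γ • D b + ⁅a₀, b⁆) (a b : L) :
    B (D a) (D b) = γ * B (D a) b + B ⁅a₀, a⁆ b := by
  rw [← bilin_map_left_eq_map_right hDinv, hpprop, map_add, map_smul, LinearMap.add_apply,
    LinearMap.smul_apply, smul_eq_mul]

theorem bilin_map_self_map_self [CharP K 2]
    (hinv : ∀ a b c : L, B ⁅a, b⁆ c = B a ⁅b, c⁆)
    (hDinv : ∀ a b : L, B (D a) b + B a (D b) = 0) (hDinv2 : ∀ a : L, B a (D a) = 0)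
    (hpprop : ∀ b : L, D (D b) = γ • D b + ⁅a₀, b⁆) (a : L) :
    B (D a) (D a) = 0 := by
  rw [bilin_map_map hDinv hpprop, hinv, lie_self, map_zero, bilin_map_left_eq_map_right hDinv,
    hDinv2, mul_zero, add_zero]

variable (D) in
def doubleExtSq (sq : L → L) (P : L → K) (γ : K) (a₀ b₀ : L) (m l : K)
    (f : K × L × K) : K × L × K :=
  (m * f.1 ^ 2 + P f.2.1 + l * f.2.2 ^ 2,
    f.1 ^ 2 • b₀ + sq f.2.1 + f.2.2 ^ 2 • a₀ + f.2.2 • D f.2.1, γ * f.2.2 ^ 2)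

variable {sq : L → L} {P : L → K} {b₀ : L} {m l : K}

theorem map_doubleExtSq_snd_fst (hres : ∀ a : L, D (sq a) = ⁅a, D a⁆)
    (hpprop : ∀ b : L, D (D b) = γ • D b + ⁅a₀, b⁆) (ha₀ : D a₀ = 0) (hb₀ : D b₀ = 0)
    (u : K) (a : L) (v : K) :
    D (doubleExtSq D sq P γ a₀ b₀ m l (u, a, v)).2.1 = ⁅a, D a⁆ + v • (γ • D a + ⁅a₀, a⁆) := by
  simp only [doubleExtSq, map_add, map_smul, hres, hpprop, ha₀, hb₀, smul_zero, zero_add, add_zero]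

theorem doubleExtBracket2_doubleExtSq [CharP K 2]
    (hinv : ∀ a b c : L, B ⁅a, b⁆ c = B a ⁅b, c⁆)
    (hder : ∀ a b : L, D ⁅a, b⁆ = ⁅D a, b⁆ + ⁅a, D b⁆)
    (hDinv : ∀ a b : L, B (D a) b + B a (D b) = 0) (hDinv2 : ∀ a : L, B a (D a) = 0)
    (hsq_ad : ∀ a b : L, ⁅sq a, b⁆ = ⁅a, ⁅a, b⁆⁆) (hres : ∀ a : L, D (sq a) = ⁅a, D a⁆)
    (hpprop : ∀ b : L, D (D b) = γ • D b + ⁅a₀, b⁆) (ha₀ : D a₀ = 0)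
    (hb₀c : ∀ a : L, ⁅b₀, a⁆ = 0) (hb₀ : D b₀ = 0) (f g : K × L × K) :
    doubleExtBracket2 B D (doubleExtSq D sq P γ a₀ b₀ m l f) g =
      doubleExtBracket2 B D f (doubleExtBracket2 B D f g) := by
  obtain ⟨u, a, v⟩ := f
  obtain ⟨u', a', v'⟩ := g
  have hmap := map_doubleExtSq_snd_fst (P := P) (m := m) (l := l) hres hpprop ha₀ hb₀ u a v
  simp only [doubleExtBracket2] at hmap ⊢
  rw [hmap]
  refine Prod.ext ?_ (Prod.ext ?_ rfl)
  · have hskew : B ⁅a, D a⁆ a' = B (D a) ⁅a, a'⁆ := by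
      rw [← hinv, ← lie_skew, map_neg, LinearMap.neg_apply, CharTwo.neg_eq]
    simp only [map_add, map_smul, LinearMap.add_apply, LinearMap.smul_apply, smul_eq_mul]
    linear_combination hskew - v * bilin_map_map hDinv hpprop a a' -
      v' * bilin_map_self_map_self hinv hDinv hDinv2 hpprop a
  · have htwo : (2 : K) • ⁅a, D a'⁆ = 0 := by rw [CharTwo.two_eq_zero, zero_smul]
    simp only [doubleExtSq, map_add, map_smul, hder, hpprop, add_lie, lie_add, smul_lie, lie_smul,
      hsq_ad, hb₀c, smul_zero, zero_add, zero_smul, add_zero]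
    linear_combination (norm := module) (-v) • htwo

theorem doubleExtSq_smul (hsq_smul : ∀ (l : K) (a : L), sq (l • a) = l ^ 2 • sq a)
    (hP_smul : ∀ (l : K) (a : L), P (l • a) = l ^ 2 * P a) (c : K) (f : K × L × K) :
    doubleExtSq D sq P γ a₀ b₀ m l (c • f) = c ^ 2 • doubleExtSq D sq P γ a₀ b₀ m l f := by
  obtain ⟨u, a, v⟩ := f
  simp only [doubleExtSq, Prod.smul_mk, smul_eq_mul, map_smul, hsq_smul, hP_smul, mul_pow,
    Prod.mk.injEq]
  exact ⟨by ring, by module, by ring⟩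

theorem doubleExtSq_add [CharP K 2]
    (hDinv : ∀ a b : L, B (D a) b + B a (D b) = 0) (hDinv2 : ∀ a : L, B a (D a) = 0)
    (hsq_add : ∀ a b : L, sq (a + b) = sq a + sq b + ⁅a, b⁆)
    (hP_add : ∀ a b : L, P (a + b) = P a + P b + B (D b) a) (f g : K × L × K) :
    doubleExtSq D sq P γ a₀ b₀ m l (f + g) =
      doubleExtSq D sq P γ a₀ b₀ m l f + doubleExtSq D sq P γ a₀ b₀ m l g +
        doubleExtBracket2 B D f g := by
  obtain ⟨u, a, v⟩ := f
  obtain ⟨u', a', v'⟩ := g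
  simp only [doubleExtSq, doubleExtBracket2, Prod.mk_add_mk, Prod.mk.injEq, CharTwo.add_sq,
    hsq_add, hP_add, map_add, bilin_map_left_comm hDinv hDinv2 a' a]
  exact ⟨by ring, by module, by ring⟩

end

theorem two_structure_on_double_extension_general
    {K : Type*} [Field K] [CharP K 2]
    {L : Type*} [LieRing L] [LieAlgebra K L]
    (B : L →ₗ[K] L →ₗ[K] K)
    (hinv : ∀ a b c : L, B ⁅a, b⁆ c = B a ⁅b, c⁆)
    (D : L →ₗ[K] L)
    (hder : ∀ a b : L, D ⁅a, b⁆ = ⁅D a, b⁆ + ⁅a, D b⁆)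
    (hDinv : ∀ a b : L, B (D a) b + B a (D b) = 0)
    (hDinv2 : ∀ a : L, B a (D a) = 0)
    -- (a) a 2-structure on 𝔞
    (sq : L → L)
    (hsq_ad : ∀ a b : L, ⁅sq a, b⁆ = ⁅a, ⁅a, b⁆⁆)
    (hsq_smul : ∀ (l : K) (a : L), sq (l • a) = l ^ 2 • sq a)
    (hsq_add : ∀ a b : L, sq (a + b) = sq a + sq b + ⁅a, b⁆)
    -- (b) D is restricted
    (hres : ∀ a : L, D (sq a) = ⁅a, D a⁆)
    -- (c) the 2-property
    (γ : K) (a₀ : L)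
    (hpprop : ∀ b : L, D (D b) = γ • D b + ⁅a₀, b⁆)
    (ha₀ : D a₀ = 0)
    -- (d) a central element killed by D
    (b₀ : L) (hb₀c : ∀ a : L, ⁅b₀, a⁆ = 0) (hb₀ : D b₀ = 0)
    -- (e) the map 𝒫
    (P : L → K)
    (hP_smul : ∀ (l : K) (a : L), P (l • a) = l ^ 2 * P a)
    (hP_add : ∀ a b : L, P (a + b) = P a + P b + B (D b) a) :
    ∀ m l : K, ∃ sqg : K × L × K → K × L × K,
      (∀ f g : K × L × K,
        doubleExtBracket2 B D (sqg f) g =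
          doubleExtBracket2 B D f (doubleExtBracket2 B D f g)) ∧
      (∀ (lam : K) (f : K × L × K), sqg (lam • f) = lam ^ 2 • sqg f) ∧
      (∀ f g : K × L × K, sqg (f + g) = sqg f + sqg g + doubleExtBracket2 B D f g) ∧
      (∀ a : L, sqg ((0 : K), a, (0 : K)) = (P a, sq a, (0 : K))) ∧
      sqg ((0 : K), (0 : L), (1 : K)) = (l, a₀, γ) ∧
      sqg ((1 : K), (0 : L), (0 : K)) = (m, b₀, (0 : K)) := by
  intro m l
  have hsq0 : sq 0 = 0 := by simpa using hsq_smul 0 0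
  have hP0 : P 0 = 0 := by simpa using hP_smul 0 0
  refine ⟨doubleExtSq D sq P γ a₀ b₀ m l,
    doubleExtBracket2_doubleExtSq hinv hder hDinv hDinv2 hsq_ad hres hpprop ha₀ hb₀c hb₀,
    doubleExtSq_smul hsq_smul hP_smul, doubleExtSq_add hDinv hDinv2 hsq_add hP_add,
    fun a => ?_, ?_, ?_⟩ <;>
  simp [doubleExtSq, hsq0, hP0]

theorem two_structure_on_double_extension
    {K : Type*} [Field K] [CharP K 2]
    {L : Type*} [LieRing L] [LieAlgebra K L]
    (B : L →ₗ[K] L →ₗ[K] K)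
    (hsym : ∀ a b : L, B a b = B b a)
    (hinv : ∀ a b c : L, B ⁅a, b⁆ c = B a ⁅b, c⁆)
    (D : L →ₗ[K] L)
    (hder : ∀ a b : L, D ⁅a, b⁆ = ⁅D a, b⁆ + ⁅a, D b⁆)
    (hDinv : ∀ a b : L, B (D a) b + B a (D b) = 0)
    (hDinv2 : ∀ a : L, B a (D a) = 0)
    -- (a) a 2-structure on 𝔞
    (sq : L → L)
    (hsq_ad : ∀ a b : L, ⁅sq a, b⁆ = ⁅a, ⁅a, b⁆⁆)
    (hsq_smul : ∀ (l : K) (a : L), sq (l • a) = l ^ 2 • sq a)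
    (hsq_add : ∀ a b : L, sq (a + b) = sq a + sq b + ⁅a, b⁆)
    -- (b) D is restricted
    (hres : ∀ a : L, D (sq a) = ⁅a, D a⁆)
    -- (c) the 2-property
    (γ : K) (a₀ : L)
    (hpprop : ∀ b : L, D (D b) = γ • D b + ⁅a₀, b⁆)
    (ha₀ : D a₀ = 0)
    -- (d) a central element killed by D
    (b₀ : L) (hb₀c : ∀ a : L, ⁅b₀, a⁆ = 0) (hb₀ : D b₀ = 0)
    -- (e) the map 𝒫
    (P : L → K)
    (hP_smul : ∀ (l : K) (a : L), P (l • a) = l ^ 2 * P a)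
    (hP_add : ∀ a b : L, P (a + b) = P a + P b + B (D b) a) :
    ∀ m l : K, ∃ sqg : K × L × K → K × L × K,
      (∀ f g : K × L × K,
        doubleExtBracket2 B D (sqg f) g =
          doubleExtBracket2 B D f (doubleExtBracket2 B D f g)) ∧
      (∀ (lam : K) (f : K × L × K), sqg (lam • f) = lam ^ 2 • sqg f) ∧
      (∀ f g : K × L × K, sqg (f + g) = sqg f + sqg g + doubleExtBracket2 B D f g) ∧
      (∀ a : L, sqg ((0 : K), a, (0 : K)) = (P a, sq a, (0 : K))) ∧
      sqg ((0 : K), (0 : L), (1 : K)) = (l, a₀, γ) ∧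
      sqg ((1 : K), (0 : L), (0 : K)) = (m, b₀, (0 : K)) :=
  two_structure_on_double_extension_general B hinv D hder hDinv hDinv2 sq hsq_ad hsq_smul hsq_add
    hres γ a₀ hpprop ha₀ b₀ hb₀c hb₀ P hP_smul hP_add
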